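/- arXiv:2509.11331 — 4 statements merged into one kernel-verified Lean document; each statement's English description precedes it below -/
import Mathlib

section
/- Let G be a quasi-acyclic 2-path-bounded oriented graph without multiple edges and without triangles. Then ν(G) ≥ 𝔯𝔥(G). -/
/-- An oriented graph: finite nonempty sets of vertices and edges with
origin and tail maps. -/
structure OrientedGraph where
  V : Type
  E : Type
  [fintypeV : Fintype V]
  [fintypeE : Fintype E]
  [nonemptyV : Nonempty V]
  [nonemptyE : Nonempty E]
  o : E → V
  t : E → V

attribute [instance] OrientedGraph.fintypeV OrientedGraph.fintypeE
  OrientedGraph.nonemptyV OrientedGraph.nonemptyE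

namespace OrientedGraph

variable (G : OrientedGraph)

/-- `G.IsPath p u v` : the edge sequence `p` is a path from `u` to `v`
(consecutive edges are composable; paths of length 0 at any vertex are allowed). -/
def IsPath (p : List G.E) (u v : G.V) : Prop :=
  List.Chain' (fun e f => G.t e = G.o f) p ∧
  ((p = [] ∧ u = v) ∨
    ∃ h : p ≠ [], u = G.o (p.head h) ∧ v = G.t (p.getLast h))

/-- The label of an edge sequence: the product of the labels of its edges
(the empty sequence maps to `1`). -/
def labelProd {M : Type} [Monoid M] (l : G.E → M) (s : List G.E) : M :=
  (s.map l).prod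

/-- The diagram `(G, l)` is commutative: any two paths with the same origin and
the same tail have equal labels. -/
def IsCommutative {M : Type} [Monoid M] (l : G.E → M) : Prop :=
  ∀ (u v : G.V) (p₁ p₂ : List G.E),
    G.IsPath p₁ u v → G.IsPath p₂ u v → G.labelProd l p₁ = G.labelProd l p₂

/-- A complete system of relations for `G`: for every monoid `M` and every
labeling `l : E → M`, the diagram `(G, l)` is commutative iff all relations hold. -/
def IsComplete (R : Finset (List G.E × List G.E)) : Prop :=
  ∀ (M : Type) [Monoid M], ∀ l : G.E → M,
    G.IsCommutative l ↔ ∀ r ∈ R, G.labelProd l r.1 = G.labelProd l r.2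

/-- A minimal complete system of relations: no proper subset is complete. -/
def IsMinimalComplete (R : Finset (List G.E × List G.E)) : Prop :=
  G.IsComplete R ∧ ∀ R' : Finset (List G.E × List G.E), R' ⊂ R → ¬ G.IsComplete R'

/-- The commutativity rank `η(G)`: the minimal cardinality of a complete
system of relations for `G`. -/
noncomputable def eta : ℕ :=
  sInf {n : ℕ | ∃ R : Finset (List G.E × List G.E), G.IsComplete R ∧ R.card = n}

/-- `S'` is obtained from `S` by one multiplication. -/
def MulStep (S S' : Set (List G.E)) : Prop :=
  ∃ s ∈ S, ∃ s' ∈ S, S' = S ∪ {s ++ s'}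

/-- `G.mCost S S'` : the minimal number of multiplications needed to obtain `S'`
from `S` (`⊤` if impossible). -/
noncomputable def mCost (S S' : Set (List G.E)) : ℕ∞ :=
  sInf {k : ℕ∞ | ∃ n : ℕ, k = n ∧ ∃ f : ℕ → Set (List G.E),
    f 0 = S ∧ f n = S' ∧ ∀ i < n, G.MulStep (f i) (f (i + 1))}

/-- `S_R`: the set of all edge sequences appearing in the relations of `R`. -/
def relSet (R : Finset (List G.E × List G.E)) : Set (List G.E) :=
  {s | ∃ r ∈ R, s = r.1 ∨ s = r.2}

/-- `ℰ`: the empty sequence together with all one-edge sequences. -/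
def baseSet : Set (List G.E) :=
  {s | s = [] ∨ ∃ e : G.E, s = [e]}

/-- `m(R)`: the minimal number of multiplications needed to build all sequences
appearing in `R`, starting from `ℰ`. -/
noncomputable def mRel (R : Finset (List G.E × List G.E)) : ℕ∞ :=
  sInf {k : ℕ∞ | ∃ S : Set (List G.E), G.relSet R ⊆ S ∧ k = G.mCost G.baseSet S}

/-- The multiplication rank `ν(G)`. -/
noncomputable def nu : ℕ∞ :=
  sInf {k : ℕ∞ | ∃ R : Finset (List G.E × List G.E), G.IsComplete R ∧ k = G.mRel R}

/-- A 4-tuple of edges `(a, b, c, d)` forms a rhomboid. -/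
def IsRhomboid (r : G.E × G.E × G.E × G.E) : Prop :=
  G.o r.1 = G.o r.2.2.1 ∧ G.t r.2.1 = G.t r.2.2.2 ∧
  G.t r.1 = G.o r.2.1 ∧ G.t r.2.2.1 = G.o r.2.2.2 ∧
  G.o r.1 ≠ G.t r.1 ∧ G.o r.1 ≠ G.o r.2.2.2 ∧ G.o r.1 ≠ G.t r.2.2.2 ∧
  G.t r.1 ≠ G.o r.2.2.2 ∧ G.t r.1 ≠ G.t r.2.2.2 ∧ G.o r.2.2.2 ≠ G.t r.2.2.2

/-- Two rhomboids `(a, b, c, d)` and `(a', b', c', d')` are disjoint. -/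
def RhDisjoint (r r' : G.E × G.E × G.E × G.E) : Prop :=
  (r.1 ≠ r'.1 ∨ r.2.1 ≠ r'.2.1) ∧
  (r.1 ≠ r'.2.2.1 ∨ r.2.1 ≠ r'.2.2.2) ∧
  (r.2.2.1 ≠ r'.2.2.1 ∨ r.2.2.2 ≠ r'.2.2.2) ∧
  (r.2.2.1 ≠ r'.1 ∨ r.2.2.2 ≠ r'.2.1)

/-- `𝔯𝔥(G)`: the maximal cardinality of a family of pairwise disjoint rhomboids in `G`. -/
noncomputable def rhNum : ℕ :=
  sSup {n : ℕ | ∃ F : Finset (G.E × G.E × G.E × G.E),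
    (∀ r ∈ F, G.IsRhomboid r) ∧
    (∀ r ∈ F, ∀ r' ∈ F, r ≠ r' → G.RhDisjoint r r') ∧ F.card = n}

/-- `𝔏(G)`: the number of loops of `G`. -/
noncomputable def loopCount : ℕ :=
  Nat.card {e : G.E // G.o e = G.t e}

/-- `G` is quasi-acyclic: no directed cycle visiting two or more distinct vertices. -/
def QuasiAcyclic : Prop :=
  ∀ u v : G.V, u ≠ v →
    ∀ p q : List G.E, G.IsPath p u v → G.IsPath q v u → False

/-- `G` is 2-path-bounded: every oriented path avoiding loop edges has length at most 2. -/
def TwoPathBounded : Prop :=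
  ∀ (p : List G.E) (u v : G.V), G.IsPath p u v →
    (∀ e ∈ p, G.o e ≠ G.t e) → p.length ≤ 2

/-- `G` has a pair of multiple edges. -/
def HasMultipleEdges : Prop :=
  ∃ e e' : G.E, e ≠ e' ∧ G.t e = G.t e' ∧ G.o e = G.o e' ∧ G.t e ≠ G.o e

/-- `G` has a triangle. -/
def HasTriangle : Prop :=
  ∃ a b c : G.E, G.o a = G.o b ∧ G.t b = G.o c ∧ G.t c = G.t a ∧
    G.o a ≠ G.t a ∧ G.o b ≠ G.t b ∧ G.o c ≠ G.t c

/-- `G` has no loops. -/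
def NoLoops : Prop := ∀ e : G.E, G.o e ≠ G.t e

/-- Every edge occurring on either side of the relation `r` is a loop. -/
def AllLoops (r : List G.E × List G.E) : Prop :=
  (∀ e ∈ r.1, G.o e = G.t e) ∧ (∀ e ∈ r.2, G.o e = G.t e)

/-- Both sides of the relation `r` contain at least one non-loop edge. -/
def BothSidesNonLoop (r : List G.E × List G.E) : Prop :=
  (∃ e ∈ r.1, G.o e ≠ G.t e) ∧ (∃ e ∈ r.2, G.o e ≠ G.t e)

end OrientedGraph

/-- The triploid `T(n₁, n₂, n₃, n₀, e)`. -/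
def Triploid (n₁ n₂ n₃ n₀ e : ℕ) (hn₁ : 0 < n₁) (he : n₂ * (n₁ + n₃) ≤ e)
    (he₀ : 0 < e) : OrientedGraph where
  V := Fin n₀ ⊕ Fin n₁ ⊕ Fin n₂ ⊕ Fin n₃
  E := (Fin n₁ × Fin n₂) ⊕ (Fin n₂ × Fin n₃) ⊕ Fin (e - n₂ * (n₁ + n₃))
  nonemptyV := ⟨Sum.inr (Sum.inl ⟨0, hn₁⟩)⟩
  nonemptyE := by
    by_cases h : n₂ * (n₁ + n₃) < e
    · exact ⟨Sum.inr (Sum.inr ⟨0, by omega⟩)⟩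
    · have h2 : 0 < n₂ := by
        rcases Nat.eq_zero_or_pos n₂ with h0 | h0
        · exfalso; subst h0; simp at h; omega
        · exact h0
      exact ⟨Sum.inl (⟨0, hn₁⟩, ⟨0, h2⟩)⟩
  o := Sum.elim (fun p => Sum.inr (Sum.inl p.1))
        (Sum.elim (fun p => Sum.inr (Sum.inr (Sum.inl p.1)))
          (fun _ => Sum.inr (Sum.inl ⟨0, hn₁⟩)))
  t := Sum.elim (fun p => Sum.inr (Sum.inr (Sum.inl p.2)))
        (Sum.elim (fun p => Sum.inr (Sum.inr (Sum.inr p.2)))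
          (fun _ => Sum.inr (Sum.inl ⟨0, hn₁⟩)))

/-!
Delete the loops from every word. A multiplication `s ++ s'` creates at most one new pair of
adjacent edges (the last edge of `s` followed by the first edge of `s'`), and words of length at
most one have none, so building the words of a system `R` costs at least as many multiplications
as there are adjacent pairs in them.

If `R` is complete, then for every rhomboid `(a, b, c, d)` some word of `R` contains `a b` or `c d`
as an adjacent pair. Label each word by its flags for the patterns `a b` and `c d`: whether it
starts with `b` (resp. `d`), ends with `a` (resp. `c`), and contains the pattern. This labeling
separates `a b` from `c d`, so some relation of `R` separates it. Forgetting the pattern flags gives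
a commutative diagram: under the hypotheses on `G` a diagram commutes as soon as loops are trivial
and loop-free 2-paths with common ends agree, and no loop-free 2-path starts with `b` or ends
with `a`. Hence the two sides of that relation have the same remaining flags, and one of them must
contain a pattern. Disjoint rhomboids have disjoint pairs of sides, which gives `ν(G) ≥ 𝔯𝔥(G)`.
-/

theorem List.pair_infix_append_iff {α : Type*} {x y : α} {l₁ l₂ : List α} :
    [x, y] <:+: l₁ ++ l₂ ↔
      [x, y] <:+: l₁ ∨ [x, y] <:+: l₂ ∨
        (l₁.getLast? = some x ∧ l₂.head? = some y) := by
  rw [List.infix_append_iff_ne_nil, ← List.singleton_suffix_iff_getLast?_eq_some,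
    ← List.singleton_prefix_iff_head?_eq_some]
  constructor
  · rintro (h | h | ⟨s, t, hs, ht, hst, h₁, h₂⟩)
    · exact Or.inl h
    · exact Or.inr (Or.inl h)
    · obtain ⟨a, s, rfl⟩ := List.exists_cons_of_ne_nil hs
      obtain ⟨b, t, rfl⟩ := List.exists_cons_of_ne_nil ht
      cases s <;> cases t <;> simp_all
  · rintro (h | h | ⟨h₁, h₂⟩)
    · exact Or.inl h
    · exact Or.inr (Or.inl h)
    · exact Or.inr (Or.inr ⟨[x], [y], by simp, by simp, rfl, h₁, h₂⟩)

/-- Flags of a nonempty word relative to a pattern `x y`: it starts with `y`, it ends with `x`;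
`PairFlags` also records whether `x y` is a factor of it. -/
@[ext]
structure EndFlags where
  startsWith : Prop
  endsWith : Prop

instance : Semigroup EndFlags where
  mul s t := ⟨s.startsWith, t.endsWith⟩
  mul_assoc _ _ _ := rfl

@[ext]
structure PairFlags extends EndFlags where
  hasPair : Prop

instance : Semigroup PairFlags where
  mul s t :=
    ⟨s.toEndFlags * t.toEndFlags, s.hasPair ∨ t.hasPair ∨ (s.endsWith ∧ t.startsWith)⟩
  mul_assoc _ _ _ := by
    ext
    · rfl
    · rfl
    · show (_ ∨ _ ∨ _) ∨ _ ∨ _ ↔ _ ∨ (_ ∨ _ ∨ _) ∨ _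
      tauto

@[simp]
theorem EndFlags.mk_mul_mk (p q p' q' : Prop) :
    (⟨p, q⟩ * ⟨p', q'⟩ : EndFlags) = ⟨p, q'⟩ := rfl

@[simp]
theorem PairFlags.toEndFlags_mul (s t : PairFlags) :
    (s * t).toEndFlags = s.toEndFlags * t.toEndFlags := rfl

@[simp]
theorem PairFlags.hasPair_mul (s t : PairFlags) :
    (s * t).hasPair = (s.hasPair ∨ t.hasPair ∨ (s.endsWith ∧ t.startsWith)) := rfl

def PairFlags.forget : WithOne PairFlags →* WithOne EndFlags :=
  WithOne.mapMulHom ⟨PairFlags.toEndFlags, fun _ _ => rfl⟩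

def pairSummary {α : Type*} (x y : α) : List α → WithOne PairFlags
  | [] => 1
  | w@(_ :: _) => (⟨⟨w.head? = some y, w.getLast? = some x⟩, [x, y] <:+: w⟩ : PairFlags)

theorem pairSummary_of_ne_nil {α : Type*} (x y : α) {l : List α} (hl : l ≠ []) :
    pairSummary x y l =
      (⟨⟨l.head? = some y, l.getLast? = some x⟩, [x, y] <:+: l⟩ : PairFlags) := by
  obtain ⟨a, l, rfl⟩ := List.exists_cons_of_ne_nil hl
  rfl

theorem pairSummary_append {α : Type*} (x y : α) (l₁ l₂ : List α) :
    pairSummary x y (l₁ ++ l₂) = pairSummary x y l₁ * pairSummary x y l₂ := by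
  rcases eq_or_ne l₁ [] with rfl | h₁
  · simp [pairSummary]
  rcases eq_or_ne l₂ [] with rfl | h₂
  · simp [pairSummary]
  rw [pairSummary_of_ne_nil x y h₁, pairSummary_of_ne_nil x y h₂,
    pairSummary_of_ne_nil x y (List.append_ne_nil_of_left_ne_nil h₁ _), ← WithOne.coe_mul]
  congr 1
  ext
  · simp [List.head?_append, List.head?_eq_none_iff.not.mpr h₁]
  · simp [List.getLast?_eq_none_iff.not.mpr h₂]
  · simpa using List.pair_infix_append_iff

theorem pairSummary_eq_of_forget_eq {α : Type*} {x y : α} {l₁ l₂ : List α}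
    (h₁ : ¬ [x, y] <:+: l₁) (h₂ : ¬ [x, y] <:+: l₂)
    (h : PairFlags.forget (pairSummary x y l₁) = PairFlags.forget (pairSummary x y l₂)) :
    pairSummary x y l₁ = pairSummary x y l₂ := by
  match l₁, l₂ with
  | [], [] => rfl
  | [], _ :: _ | _ :: _, [] => exact absurd h (by simp [pairSummary, PairFlags.forget])
  | _ :: _, _ :: _ =>
    simp only [pairSummary, PairFlags.forget, WithOne.mapMulHom_coe, WithOne.coe_inj,
      MulHom.coe_mk] at h ⊢
    rw [EndFlags.ext_iff] at h
    exact PairFlags.ext h.1 h.2 (propext (iff_of_false h₁ h₂))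

theorem pairSummary_pair_ne {α : Type*} {x y : α} {l : List α} (h : ¬ [x, y] <:+: l) :
    pairSummary x y [x, y] ≠ pairSummary x y l := by
  intro heq
  match l, h, heq with
  | [], _, heq => exact WithOne.coe_ne_one heq
  | _ :: _, h, heq =>
    rw [pairSummary, pairSummary, WithOne.coe_inj] at heq
    exact h (cast (congrArg PairFlags.hasPair heq) List.infix_rfl)

theorem Finset.card_le_card_of_pairwiseDisjoint {ι β : Type*} {F : Finset ι} {T : Finset β}
    {s : ι → Set β} (hs : (F : Set ι).PairwiseDisjoint s)
    (hT : ∀ i ∈ F, ∃ b ∈ s i, b ∈ T) :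
    F.card ≤ T.card := by
  choose g hg using fun i : F => hT i i.2
  rw [← Finset.card_attach]
  exact Finset.card_le_card_of_injOn g (fun i _ => (hg i).2) fun i _ j _ hij =>
    Subtype.ext (hs.elim_set i.2 j.2 (g i) (hg i).1 (hij ▸ (hg j).1))

def rhomboidSides {α : Type*} (r : α × α × α × α) : Set (α × α) :=
  {(r.1, r.2.1), (r.2.2.1, r.2.2.2)}

namespace OrientedGraph

open scoped Classical

variable {G : OrientedGraph}

theorem labelProd_append {M : Type} [Monoid M] (l : G.E → M) (u v : List G.E) :
    G.labelProd l (u ++ v) = G.labelProd l u * G.labelProd l v := by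
  simp [labelProd]

theorem labelProd_comp {M N : Type} [Monoid M] [Monoid N] (φ : M →* N) (l : G.E → M)
    (w : List G.E) : G.labelProd (φ ∘ l) w = φ (G.labelProd l w) := by
  simp [labelProd, map_list_prod]

theorem labelProd_prodMk {M N : Type} [Monoid M] [Monoid N] (l₁ : G.E → M) (l₂ : G.E → N)
    (w : List G.E) :
    G.labelProd (fun e => (l₁ e, l₂ e)) w = (G.labelProd l₁ w, G.labelProd l₂ w) :=
  Prod.ext (labelProd_comp (MonoidHom.fst M N) (fun e => (l₁ e, l₂ e)) w).symm
    (labelProd_comp (MonoidHom.snd M N) (fun e => (l₁ e, l₂ e)) w).symm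

variable (G) in
noncomputable def dropLoops (w : List G.E) : List G.E :=
  w.filter fun e => G.o e ≠ G.t e

theorem mem_dropLoops {e : G.E} {w : List G.E} :
    e ∈ G.dropLoops w ↔ e ∈ w ∧ G.o e ≠ G.t e := by
  simp [dropLoops]

theorem dropLoops_append (u v : List G.E) :
    G.dropLoops (u ++ v) = G.dropLoops u ++ G.dropLoops v :=
  List.filter_append ..

theorem dropLoops_cons (e : G.E) (w : List G.E) :
    G.dropLoops (e :: w) = G.dropLoops [e] ++ G.dropLoops w :=
  dropLoops_append [e] w

theorem dropLoops_eq_self {w : List G.E} (hw : ∀ e ∈ w, G.o e ≠ G.t e) : G.dropLoops w = w :=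
  List.filter_eq_self.mpr (by simpa using hw)

theorem dropLoops_singleton_of_loop {e : G.E} (he : G.o e = G.t e) : G.dropLoops [e] = [] := by
  simp [dropLoops, he]

theorem dropLoops_singleton_of_ne {e : G.E} (he : G.o e ≠ G.t e) : G.dropLoops [e] = [e] := by
  simp [dropLoops, he]

theorem labelProd_dropLoops {M : Type} [Monoid M] {l : G.E → M}
    (hl : ∀ e, G.o e = G.t e → l e = 1) (w : List G.E) :
    G.labelProd l (G.dropLoops w) = G.labelProd l w := by
  induction w with
  | nil => rfl
  | cons e w ih =>
    have he : G.labelProd l (G.dropLoops [e]) = l e := by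
      by_cases he : G.o e = G.t e
      · simp [dropLoops_singleton_of_loop he, labelProd, hl e he]
      · simp [dropLoops_singleton_of_ne he, labelProd]
    rw [dropLoops_cons, labelProd_append, ih, he]
    simp [labelProd]

theorem isPath_iff {p : List G.E} {u v : G.V} :
    G.IsPath p u v ↔ p.IsChain (fun e f => G.t e = G.o f) ∧
      ((p = [] ∧ u = v) ∨ ∃ h : p ≠ [], u = G.o (p.head h) ∧ v = G.t (p.getLast h)) :=
  Iff.rfl

@[simp]
theorem isPath_nil_iff {u v : G.V} : G.IsPath [] u v ↔ u = v := by
  simp [isPath_iff]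

@[simp]
theorem isPath_cons_iff {e : G.E} {p : List G.E} {u v : G.V} :
    G.IsPath (e :: p) u v ↔ u = G.o e ∧ G.IsPath p (G.t e) v := by
  cases p with
  | nil => simp [isPath_iff, eq_comm]
  | cons f p =>
    simp [isPath_iff, List.getLast_cons, and_left_comm, and_assoc]

theorem IsPath.dropLoops {p : List G.E} {u v : G.V} (hp : G.IsPath p u v) :
    G.IsPath (G.dropLoops p) u v := by
  induction p generalizing u with
  | nil => exact hp
  | cons e p ih =>
    rw [isPath_cons_iff] at hp
    rw [dropLoops_cons]
    by_cases he : G.o e = G.t e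
    · rw [dropLoops_singleton_of_loop he, List.nil_append, hp.1, he]
      exact ih hp.2
    · rw [dropLoops_singleton_of_ne he, List.singleton_append, isPath_cons_iff]
      exact ⟨hp.1, ih hp.2⟩

variable (G) in
def IsTwoPath (e f : G.E) : Prop :=
  G.t e = G.o f ∧ G.o e ≠ G.t e ∧ G.o f ≠ G.t f

theorem TwoPathBounded.not_isTwoPath_isTwoPath (hpb : G.TwoPathBounded) {e f g : G.E}
    (hef : G.IsTwoPath e f) (hfg : G.IsTwoPath f g) : False := by
  have := hpb [e, f, g] (G.o e) (G.t g) (by simp [hef.1, hfg.1]) (by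
    simp only [List.mem_cons, List.not_mem_nil, or_false]
    rintro _ (rfl | rfl | rfl)
    exacts [hef.2.1, hef.2.2, hfg.2.2])
  simp at this

theorem eq_nil_of_isPath_self (hqa : G.QuasiAcyclic) (hpb : G.TwoPathBounded)
    {p : List G.E} {u : G.V} (hp : G.IsPath p u u) (hlf : ∀ e ∈ p, G.o e ≠ G.t e) :
    p = [] := by
  have hlen := hpb p u u hp hlf
  match p, hp, hlf with
  | [], _, _ => rfl
  | [e], hp, hlf =>
    simp only [isPath_cons_iff, isPath_nil_iff] at hp
    exact absurd (hp.1.symm.trans hp.2.symm) (hlf e (by simp))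
  | [e, f], hp, hlf =>
    simp only [isPath_cons_iff, isPath_nil_iff] at hp
    obtain ⟨rfl, hef, hfu⟩ := hp
    exact (hqa _ _ (hlf e (by simp)) [e] [f] (by simp) (by simp [hef, hfu])).elim
  | _ :: _ :: _ :: _, _, _ => simp at hlen

theorem eq_of_isPath_of_length_le_one (hqa : G.QuasiAcyclic) (hpb : G.TwoPathBounded)
    (hme : ¬ G.HasMultipleEdges) (htr : ¬ G.HasTriangle) {p q : List G.E} {u v : G.V}
    (hp : G.IsPath p u v) (hq : G.IsPath q u v) (hlp : ∀ e ∈ p, G.o e ≠ G.t e)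
    (hlq : ∀ e ∈ q, G.o e ≠ G.t e) (hlen : p.length ≤ 1) : p = q := by
  have hqlen := hpb q u v hq hlq
  match p, q, hp, hq, hlp, hlq with
  | [], q, hp, hq, _, hlq =>
    rw [isPath_nil_iff] at hp
    subst hp
    exact (eq_nil_of_isPath_self hqa hpb hq hlq).symm
  | [e], [], hp, hq, hlp, _ =>
    simp only [isPath_cons_iff, isPath_nil_iff] at hp hq
    exact absurd (hp.1.symm.trans (hq.trans hp.2.symm)) (hlp e (by simp))
  | [e], [e'], hp, hq, hlp, _ =>
    simp only [isPath_cons_iff, isPath_nil_iff] at hp hq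
    by_contra hne
    exact hme ⟨e, e', fun h => hne (by rw [h]), hp.2.trans hq.2.symm, hp.1.symm.trans hq.1,
      (hlp e (by simp)).symm⟩
  | [e], [e', f'], hp, hq, hlp, hlq =>
    simp only [isPath_cons_iff, isPath_nil_iff] at hp hq
    exact (htr ⟨e, e', f', hp.1.symm.trans hq.1, hq.2.1, hq.2.2.trans hp.2.symm,
      hlp e (by simp), hlq e' (by simp), hlq f' (by simp)⟩).elim
  | [_], _ :: _ :: _ :: _, _, _, _, _ => simp at hqlen
  | _ :: _ :: _, _, _, _, _, _ => simp at hlen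

theorem eq_or_length_eq_two_of_isPath (hqa : G.QuasiAcyclic) (hpb : G.TwoPathBounded)
    (hme : ¬ G.HasMultipleEdges) (htr : ¬ G.HasTriangle) {p q : List G.E} {u v : G.V}
    (hp : G.IsPath p u v) (hq : G.IsPath q u v) (hlp : ∀ e ∈ p, G.o e ≠ G.t e)
    (hlq : ∀ e ∈ q, G.o e ≠ G.t e) : p = q ∨ (p.length = 2 ∧ q.length = 2) := by
  by_cases hpl : p.length ≤ 1
  · exact Or.inl (eq_of_isPath_of_length_le_one hqa hpb hme htr hp hq hlp hlq hpl)
  by_cases hql : q.length ≤ 1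
  · exact Or.inl (eq_of_isPath_of_length_le_one hqa hpb hme htr hq hp hlq hlp hql).symm
  have := hpb p u v hp hlp
  have := hpb q u v hq hlq
  omega

theorem isCommutative_of_twoPaths (hqa : G.QuasiAcyclic) (hpb : G.TwoPathBounded)
    (hme : ¬ G.HasMultipleEdges) (htr : ¬ G.HasTriangle) {M : Type} [Monoid M] {l : G.E → M}
    (hloop : ∀ e, G.o e = G.t e → l e = 1)
    (htwo : ∀ e f e' f', G.IsTwoPath e f → G.IsTwoPath e' f' → G.o e = G.o e' →
      G.t f = G.t f' → l e * l f = l e' * l f') :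
    G.IsCommutative l := by
  intro u v p q hp hq
  rw [← labelProd_dropLoops hloop p, ← labelProd_dropLoops hloop q]
  have hlp : ∀ e ∈ G.dropLoops p, G.o e ≠ G.t e := fun e he => (mem_dropLoops.mp he).2
  have hlq : ∀ e ∈ G.dropLoops q, G.o e ≠ G.t e := fun e he => (mem_dropLoops.mp he).2
  rcases eq_or_length_eq_two_of_isPath hqa hpb hme htr hp.dropLoops hq.dropLoops hlp hlq
    with h | ⟨hp2, hq2⟩
  · rw [h]
  obtain ⟨e, f, hef⟩ := List.length_eq_two.mp hp2
  obtain ⟨e', f', hef'⟩ := List.length_eq_two.mp hq2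
  have hp' := hp.dropLoops
  have hq' := hq.dropLoops
  rw [hef] at hp' hlp ⊢
  rw [hef'] at hq' hlq ⊢
  simp only [isPath_cons_iff, isPath_nil_iff] at hp' hq'
  simpa [labelProd] using htwo e f e' f' ⟨hp'.2.1, hlp e (by simp), hlp f (by simp)⟩
    ⟨hq'.2.1, hlq e' (by simp), hlq f' (by simp)⟩ (hp'.1.symm.trans hq'.1)
    (hp'.2.2.trans hq'.2.2.symm)

theorem isCommutative_prodMk_iff {M N : Type} [Monoid M] [Monoid N] {l₁ : G.E → M}
    {l₂ : G.E → N} :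
    G.IsCommutative (fun e => (l₁ e, l₂ e)) ↔
      G.IsCommutative l₁ ∧ G.IsCommutative l₂ := by
  simp only [IsCommutative, labelProd_prodMk, Prod.mk.injEq, imp_and, forall_and]

theorem IsComplete.exists_mem_ne_map_eq {R : Finset (List G.E × List G.E)} (hR : G.IsComplete R)
    {M N : Type} [Monoid M] [Monoid N] (φ : M →* N) {l : G.E → M}
    (hl : ¬ G.IsCommutative l) (hφl : G.IsCommutative (φ ∘ l)) :
    ∃ r ∈ R, G.labelProd l r.1 ≠ G.labelProd l r.2 ∧
      φ (G.labelProd l r.1) = φ (G.labelProd l r.2) := by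
  obtain ⟨r, hr, hne⟩ : ∃ r ∈ R, G.labelProd l r.1 ≠ G.labelProd l r.2 := by
    by_contra! h
    exact hl ((hR M l).mpr h)
  refine ⟨r, hr, hne, ?_⟩
  rw [← labelProd_comp, ← labelProd_comp]
  exact (hR N (φ ∘ l)).mp hφl r hr

variable (G) in
noncomputable def pairLabel (x y e : G.E) : WithOne PairFlags :=
  pairSummary x y (G.dropLoops [e])

theorem labelProd_pairLabel (x y : G.E) (w : List G.E) :
    G.labelProd (G.pairLabel x y) w = pairSummary x y (G.dropLoops w) := by
  induction w with
  | nil => rfl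
  | cons e w ih =>
    rw [dropLoops_cons, pairSummary_append, ← ih]
    simp [labelProd, pairLabel]

theorem isCommutative_forget_pairLabel (hqa : G.QuasiAcyclic) (hpb : G.TwoPathBounded)
    (hme : ¬ G.HasMultipleEdges) (htr : ¬ G.HasTriangle) {x x' y' y : G.E}
    (hx : G.IsTwoPath x x') (hy : G.IsTwoPath y' y) :
    G.IsCommutative (PairFlags.forget ∘ G.pairLabel x y) := by
  have hconst : ∀ e f, G.IsTwoPath e f →
      (PairFlags.forget ∘ G.pairLabel x y) e * (PairFlags.forget ∘ G.pairLabel x y) f =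
        ((⟨False, False⟩ : EndFlags) : WithOne EndFlags) := by
    intro e f hef
    have hey : e ≠ y := by
      rintro rfl
      exact hpb.not_isTwoPath_isTwoPath hy hef
    have hfx : f ≠ x := by
      rintro rfl
      exact hpb.not_isTwoPath_isTwoPath hef hx
    simp [pairLabel, dropLoops_singleton_of_ne hef.2.1, dropLoops_singleton_of_ne hef.2.2,
      pairSummary, PairFlags.forget, ← WithOne.coe_mul, hey, hfx]
  refine isCommutative_of_twoPaths hqa hpb hme htr (fun e he => ?_) ?_
  · simp [pairLabel, dropLoops_singleton_of_loop he, pairSummary]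
  · intro e f e' f' hef he'f' _ _
    rw [hconst e f hef, hconst e' f' he'f']

theorem not_isCommutative_pairLabel {a b c d : G.E} (hab : G.IsTwoPath a b)
    (hcd : G.IsTwoPath c d) (ho : G.o a = G.o c) (ht : G.t b = G.t d) (hac : a ≠ c) :
    ¬ G.IsCommutative (G.pairLabel a b) := by
  intro h
  have := h (G.o a) (G.t b) [a, b] [c, d] (by simp [hab.1]) (by simp [ho, ht, hcd.1])
  rw [labelProd_pairLabel, labelProd_pairLabel, dropLoops_eq_self (by simp [hab.2.1, hab.2.2]),
    dropLoops_eq_self (by simp [hcd.2.1, hcd.2.2])] at this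
  refine pairSummary_pair_ne (fun h => hac ?_) this
  exact (List.cons_eq_cons.mp (h.eq_of_length rfl)).1

theorem RhDisjoint.disjoint_rhomboidSides {r r' : G.E × G.E × G.E × G.E}
    (h : G.RhDisjoint r r') : Disjoint (rhomboidSides r) (rhomboidSides r') := by
  obtain ⟨h₁, h₂, h₃, h₄⟩ := h
  simp only [rhomboidSides, Set.disjoint_left, Set.mem_insert_iff, Set.mem_singleton_iff]
  rintro p (rfl | rfl) (h | h) <;> simp only [Prod.mk.injEq] at h <;> tauto

theorem IsRhomboid.exists_side_infix_dropLoops (hqa : G.QuasiAcyclic) (hpb : G.TwoPathBounded)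
    (hme : ¬ G.HasMultipleEdges) (htr : ¬ G.HasTriangle) {R : Finset (List G.E × List G.E)}
    (hR : G.IsComplete R) {r : G.E × G.E × G.E × G.E} (hr : G.IsRhomboid r) :
    ∃ w ∈ G.relSet R, ∃ p ∈ rhomboidSides r, [p.1, p.2] <:+: G.dropLoops w := by
  obtain ⟨a, b, c, d⟩ := r
  obtain ⟨hoac, htbd, htaob, htcod, hoa, hoad, -, htaod, htatd, hod⟩ := hr
  have hab : G.IsTwoPath a b := ⟨htaob, hoa, by rwa [← htaob, htbd]⟩
  have hcd : G.IsTwoPath c d := ⟨htcod, by rwa [← hoac, htcod], hod⟩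
  let l : G.E → WithOne PairFlags × WithOne PairFlags :=
    fun e => (G.pairLabel a b e, G.pairLabel c d e)
  have hl : ¬ G.IsCommutative l := fun h => not_isCommutative_pairLabel hab hcd hoac htbd
    (fun hac => htaod (hac ▸ htcod)) (isCommutative_prodMk_iff.mp h).1
  have hφl : G.IsCommutative ((PairFlags.forget.prodMap PairFlags.forget) ∘ l) :=
    isCommutative_prodMk_iff.mpr ⟨isCommutative_forget_pairLabel hqa hpb hme htr hab hab,
      isCommutative_forget_pairLabel hqa hpb hme htr hcd hcd⟩
  obtain ⟨s, hs, hne, heq⟩ := hR.exists_mem_ne_map_eq _ hl hφl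
  have hs₁ : s.1 ∈ G.relSet R := ⟨s, hs, Or.inl rfl⟩
  have hs₂ : s.2 ∈ G.relSet R := ⟨s, hs, Or.inr rfl⟩
  have hab_side : (a, b) ∈ rhomboidSides (a, b, c, d) := Or.inl rfl
  have hcd_side : (c, d) ∈ rhomboidSides (a, b, c, d) := Or.inr rfl
  by_contra! hno
  refine hne ?_
  simp only [l, labelProd_prodMk, labelProd_pairLabel, MonoidHom.coe_prodMap, Prod.map,
    Prod.mk.injEq] at heq ⊢
  exact ⟨pairSummary_eq_of_forget_eq (hno _ hs₁ _ hab_side) (hno _ hs₂ _ hab_side) heq.1,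
    pairSummary_eq_of_forget_eq (hno _ hs₁ _ hcd_side) (hno _ hs₂ _ hcd_side) heq.2⟩

variable (G) in
noncomputable def adjacentPairs (S : Set (List G.E)) : Finset (G.E × G.E) :=
  Finset.univ.filter fun p => ∃ w ∈ S, [p.1, p.2] <:+: G.dropLoops w

theorem mem_adjacentPairs {S : Set (List G.E)} {p : G.E × G.E} :
    p ∈ G.adjacentPairs S ↔ ∃ w ∈ S, [p.1, p.2] <:+: G.dropLoops w := by
  simp [adjacentPairs]

theorem adjacentPairs_baseSet : G.adjacentPairs G.baseSet = ∅ := by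
  refine Finset.eq_empty_of_forall_notMem fun p hp => ?_
  obtain ⟨w, hw, hinf⟩ := mem_adjacentPairs.mp hp
  have : 2 ≤ w.length := hinf.length_le.trans (List.length_filter_le _ w)
  rcases hw with rfl | ⟨e, rfl⟩ <;> simp at this

theorem MulStep.card_adjacentPairs_le {S S' : Set (List G.E)} (h : G.MulStep S S') :
    (G.adjacentPairs S').card ≤ (G.adjacentPairs S).card + 1 := by
  obtain ⟨u, hu, v, hv, rfl⟩ := h
  have hsub : G.adjacentPairs (S ∪ {u ++ v}) ⊆ G.adjacentPairs S ∪
      (G.dropLoops u).getLast?.toFinset ×ˢ (G.dropLoops v).head?.toFinset := by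
    intro p hp
    simp only [mem_adjacentPairs, Finset.mem_union, Finset.mem_product, Option.mem_toFinset,
      Option.mem_def] at hp ⊢
    obtain ⟨w, hw | rfl, hinf⟩ := hp
    · exact Or.inl ⟨w, hw, hinf⟩
    rw [dropLoops_append, List.pair_infix_append_iff] at hinf
    rcases hinf with h | h | h
    · exact Or.inl ⟨u, hu, h⟩
    · exact Or.inl ⟨v, hv, h⟩
    · exact Or.inr h
  calc (G.adjacentPairs (S ∪ {u ++ v})).card
      ≤ (G.adjacentPairs S).card +
          ((G.dropLoops u).getLast?.toFinset ×ˢ (G.dropLoops v).head?.toFinset).card :=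
        (Finset.card_le_card hsub).trans (Finset.card_union_le _ _)
    _ ≤ (G.adjacentPairs S).card + 1 := by
      gcongr
      refine Finset.card_le_one.mpr fun p hp q hq => ?_
      simp only [Finset.mem_product, Option.mem_toFinset, Option.mem_def] at hp hq
      exact Prod.ext (Option.some_injective _ (hp.1.symm.trans hq.1))
        (Option.some_injective _ (hp.2.symm.trans hq.2))

theorem card_adjacentPairs_le_mCost (S : Set (List G.E)) :
    ((G.adjacentPairs S).card : ℕ∞) ≤ G.mCost G.baseSet S := by
  refine le_sInf ?_
  rintro _ ⟨n, rfl, f, h0, rfl, hstep⟩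
  have : ∀ i ≤ n, (G.adjacentPairs (f i)).card ≤ i := by
    intro i hi
    induction i with
    | zero => simp [h0, adjacentPairs_baseSet]
    | succ i ih =>
      have := (hstep i (by omega)).card_adjacentPairs_le
      have := ih (by omega)
      omega
  exact_mod_cast this n le_rfl

theorem rhNum_le_card_adjacentPairs (hqa : G.QuasiAcyclic) (hpb : G.TwoPathBounded)
    (hme : ¬ G.HasMultipleEdges) (htr : ¬ G.HasTriangle) {R : Finset (List G.E × List G.E)}
    (hR : G.IsComplete R) {S : Set (List G.E)} (hS : G.relSet R ⊆ S) :
    G.rhNum ≤ (G.adjacentPairs S).card := by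
  refine csSup_le' ?_
  rintro _ ⟨F, hrh, hdisj, rfl⟩
  refine Finset.card_le_card_of_pairwiseDisjoint (s := rhomboidSides)
    (fun r hr r' hr' hne => (hdisj r hr r' hr' hne).disjoint_rhomboidSides) fun r hr => ?_
  obtain ⟨w, hw, p, hp, hinf⟩ := (hrh r hr).exists_side_infix_dropLoops hqa hpb hme htr hR
  exact ⟨p, hp, mem_adjacentPairs.mpr ⟨w, hS hw, hinf⟩⟩

end OrientedGraph

/-- Theorem: if `G` is quasi-acyclic, 2-path-bounded, without multiple edges and
triangles, then `ν(G) ≥ 𝔯𝔥(G)`. -/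
theorem nu_ge_rhNum (G : OrientedGraph) (hqa : G.QuasiAcyclic)
    (hpb : G.TwoPathBounded) (hme : ¬ G.HasMultipleEdges) (htr : ¬ G.HasTriangle) :
    (G.rhNum : ℕ∞) ≤ G.nu := by
  refine le_sInf ?_
  rintro _ ⟨R, hR, rfl⟩
  refine le_sInf ?_
  rintro _ ⟨S, hS, rfl⟩
  calc (G.rhNum : ℕ∞) ≤ (G.adjacentPairs S).card := by
        exact_mod_cast G.rhNum_le_card_adjacentPairs hqa hpb hme htr hR hS
    _ ≤ G.mCost G.baseSet S := G.card_adjacentPairs_le_mCost S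
end

section
/- Let G = (V, E) be a quasi-acyclic 2-path-bounded oriented graph without loops, multiple edges and triangles, and let R be any minimal complete system of relations for G. Then for every relation (s, s') ∈ R, either |s| = |s'| = 2, or |s| ≥ 3 and |s'| ≥ 3. -/
section Aux

namespace OrientedGraph

/-- In a loop-free quasi-acyclic graph there is no nonempty path from a vertex to itself. -/
lemma no_cycle (G : OrientedGraph) (hnl : G.NoLoops) (hqa : G.QuasiAcyclic)
    (u : G.V) (p : List G.E) (hp : G.IsPath p u u) : p = [] := by
  obtain ⟨hc, hor⟩ := hp
  rcases hor with ⟨rfl, -⟩ | ⟨hne, ho, ht⟩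
  · rfl
  match p, hne with
  | [e], _ =>
    exfalso
    simp only [List.head_cons, List.getLast_singleton] at ho ht
    exact hnl e (ho ▸ ht ▸ rfl)
  | e :: f :: rest, _ =>
    exfalso
    simp only [List.head_cons] at ho
    have huw : u ≠ G.t e := by
      intro h; exact hnl e (ho ▸ h ▸ rfl)
    have hchain : List.Chain' (fun a b => G.t a = G.o b) (f :: rest) := hc.tail
    have htf : G.t e = G.o f := (List.isChain_cons_cons.1 hc).1
    have hp1 : G.IsPath [e] u (G.t e) :=
      ⟨List.isChain_singleton e, Or.inr ⟨by simp, by simp [ho], by simp⟩⟩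
    have hp2 : G.IsPath (f :: rest) (G.t e) u := by
      refine ⟨hchain, Or.inr ⟨by simp, ?_, ?_⟩⟩
      · simp [htf]
      · rw [ht]
        congr 1
    exact hqa u (G.t e) huw [e] (f :: rest) hp1 hp2

/-- Endpoints of a one-edge path. -/
lemma isPath_singleton (G : OrientedGraph) {e : G.E} {u v : G.V}
    (h : G.IsPath [e] u v) : u = G.o e ∧ v = G.t e := by
  obtain ⟨-, hor⟩ := h
  rcases hor with ⟨habs, -⟩ | ⟨hne, ho, ht⟩
  · simp at habs
  · simp only [List.head_cons, List.getLast_singleton] at ho ht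
    exact ⟨ho, ht⟩

/-- No (length 1, length 2) pair of parallel paths in a triangle-free loop-free graph. -/
lemma no_one_two (G : OrientedGraph) (hnl : G.NoLoops) (htr : ¬ G.HasTriangle)
    {a b c : G.E} {u v : G.V} (h1 : G.IsPath [a] u v) (h2 : G.IsPath [b, c] u v) :
    False := by
  obtain ⟨hoa, hta⟩ := G.isPath_singleton h1
  obtain ⟨hc2, hor⟩ := h2
  rcases hor with ⟨habs, -⟩ | ⟨hne, ho, ht⟩
  · simp at habs
  simp only [List.head_cons] at ho
  have hgl : (([b, c] : List G.E).getLast hne) = c := by simp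
  rw [hgl] at ht
  have htb : G.t b = G.o c := (List.isChain_cons_cons.1 hc2).1
  exact htr ⟨a, b, c, by rw [← hoa, ← ho], htb, by rw [← ht, ← hta],
    hnl a, hnl b, hnl c⟩

/-- Parallel paths have equal lengths. -/
lemma parallel_length_eq (G : OrientedGraph) (hnl : G.NoLoops) (hqa : G.QuasiAcyclic)
    (hpb : G.TwoPathBounded) (htr : ¬ G.HasTriangle)
    (p₁ p₂ : List G.E) (u v : G.V) (h₁ : G.IsPath p₁ u v) (h₂ : G.IsPath p₂ u v) :
    p₁.length = p₂.length := by
  by_cases huv : u = v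
  · subst huv
    rw [G.no_cycle hnl hqa u p₁ h₁, G.no_cycle hnl hqa u p₂ h₂]
  · have hne₁ : p₁ ≠ [] := by
      rintro rfl
      rcases h₁.2 with ⟨-, h⟩ | ⟨h, -⟩
      · exact huv h
      · exact h rfl
    have hne₂ : p₂ ≠ [] := by
      rintro rfl
      rcases h₂.2 with ⟨-, h⟩ | ⟨h, -⟩
      · exact huv h
      · exact h rfl
    have hl₁ : p₁.length ≤ 2 := hpb p₁ u v h₁ (fun e _ => hnl e)
    have hl₂ : p₂.length ≤ 2 := hpb p₂ u v h₂ (fun e _ => hnl e)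
    have hg₁ : 1 ≤ p₁.length := List.length_pos_iff.2 hne₁
    have hg₂ : 1 ≤ p₂.length := List.length_pos_iff.2 hne₂
    have hc₁ : p₁.length = 1 ∨ p₁.length = 2 := by omega
    have hc₂ : p₂.length = 1 ∨ p₂.length = 2 := by omega
    rcases hc₁ with h1 | h1 <;> rcases hc₂ with h2 | h2
    · rw [h1, h2]
    · exfalso
      obtain ⟨a, rfl⟩ := List.length_eq_one_iff.1 h1
      obtain ⟨b, c, rfl⟩ := List.length_eq_two.1 h2
      exact G.no_one_two hnl htr h₁ h₂
    · exfalso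
      obtain ⟨a, rfl⟩ := List.length_eq_one_iff.1 h2
      obtain ⟨b, c, rfl⟩ := List.length_eq_two.1 h1
      exact G.no_one_two hnl htr h₂ h₁
    · rw [h1, h2]

/-- The length-counting labeling. -/
lemma labelProd_length (G : OrientedGraph) (s : List G.E) :
    G.labelProd (fun _ => Multiplicative.ofAdd (1 : ℕ)) s =
      Multiplicative.ofAdd (s.length : ℕ) := by
  induction s with
  | nil => rfl
  | cons e t ih =>
    simp only [labelProd, List.map_cons, List.prod_cons] at ih ⊢
    rw [ih, ← ofAdd_add, List.length_cons]
    congr 1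
    omega

end OrientedGraph

/-- Free monoid truncated at length 2. -/
inductive Tr2 (E : Type) where
  | one : Tr2 E
  | gen : E → Tr2 E
  | big : Tr2 E

namespace Tr2

instance {E : Type} : Monoid (Tr2 E) where
  one := .one
  mul x y := match x, y with
    | .one, y => y
    | x, .one => x
    | _, _ => .big
  one_mul x := by cases x <;> rfl
  mul_one x := by cases x <;> rfl
  mul_assoc x y z := by cases x <;> cases y <;> cases z <;> rfl

lemma prod_big {E : Type} (a b : E) (rest : List E) :
    ((a :: b :: rest).map Tr2.gen).prod = Tr2.big := by
  rw [List.map_cons, List.prod_cons, List.map_cons, List.prod_cons]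
  cases h : (rest.map Tr2.gen).prod <;> rfl

end Tr2

namespace OrientedGraph

/-- The truncated-free-monoid labeling is commutative. -/
lemma tr2_commutative (G : OrientedGraph) (hnl : G.NoLoops) (hqa : G.QuasiAcyclic)
    (hpb : G.TwoPathBounded) (hme : ¬ G.HasMultipleEdges) (htr : ¬ G.HasTriangle) :
    G.IsCommutative (fun e => (Tr2.gen e : Tr2 G.E)) := by
  intro u v p₁ p₂ h₁ h₂
  have hlen := G.parallel_length_eq hnl hqa hpb htr p₁ p₂ u v h₁ h₂
  match p₁, p₂, hlen with
  | [], [], _ => rfl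
  | [e], [e'], _ =>
    obtain ⟨ho, ht⟩ := G.isPath_singleton h₁
    obtain ⟨ho', ht'⟩ := G.isPath_singleton h₂
    have hee : e = e' := by
      by_contra hne
      exact hme ⟨e, e', hne, by rw [← ht, ← ht'], by rw [← ho, ← ho'],
        fun h => hnl e h.symm⟩
    rw [hee]
  | a :: b :: r₁, a' :: b' :: r₂, _ =>
    show ((a :: b :: r₁).map Tr2.gen).prod = ((a' :: b' :: r₂).map Tr2.gen).prod
    rw [Tr2.prod_big, Tr2.prod_big]
  | [_], [], h => simp at h
  | [], [_], h => simp at h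
  | [_], _ :: _ :: _, h => simp at h
  | _ :: _ :: _, [_], h => simp at h
  | [], _ :: _ :: _, h => simp at h
  | _ :: _ :: _, [], h => simp at h

end OrientedGraph

end Aux

/-- Theorem: for a minimal complete system of relations `R` of a quasi-acyclic,
2-path-bounded graph without loops, multiple edges and triangles, every relation
`(s, s') ∈ R` satisfies either `|s| = |s'| = 2`, or `|s| ≥ 3` and `|s'| ≥ 3`. -/
theorem minimal_complete_lengths (G : OrientedGraph) (hnl : G.NoLoops) (hqa : G.QuasiAcyclic)
    (hpb : G.TwoPathBounded) (hme : ¬ G.HasMultipleEdges) (htr : ¬ G.HasTriangle)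
    (R : Finset (List G.E × List G.E)) (hR : G.IsMinimalComplete R) :
    ∀ r ∈ R, (r.1.length = 2 ∧ r.2.length = 2) ∨
      (3 ≤ r.1.length ∧ 3 ≤ r.2.length) := by
  intro r hr
  classical
  obtain ⟨hcomp, hmin⟩ := hR
  -- the length-counting labeling is commutative
  have hcommN : G.IsCommutative (fun _ : G.E => Multiplicative.ofAdd (1 : ℕ)) := by
    intro u v p₁ p₂ h₁ h₂
    rw [G.labelProd_length, G.labelProd_length,
      G.parallel_length_eq hnl hqa hpb htr p₁ p₂ u v h₁ h₂]
  have hlen : r.1.length = r.2.length := by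
    have h := (hcomp (Multiplicative ℕ) (fun _ => Multiplicative.ofAdd 1)).1 hcommN r hr
    rw [G.labelProd_length, G.labelProd_length] at h
    exact Multiplicative.ofAdd.injective h
  rcases Nat.lt_or_ge r.1.length 2 with hsmall | hbig
  · -- trivial relation : contradiction with minimality
    exfalso
    have heq : r.1 = r.2 := by
      have h := (hcomp (Tr2 G.E) (fun e => Tr2.gen e)).1
        (G.tr2_commutative hnl hqa hpb hme htr) r hr
      interval_cases h1 : r.1.length
      · rw [List.length_eq_zero_iff.1 h1, List.length_eq_zero_iff.1 (by omega : r.2.length = 0)]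
      · obtain ⟨e, he⟩ := List.length_eq_one_iff.1 h1
        obtain ⟨e', he'⟩ := List.length_eq_one_iff.1 (by omega : r.2.length = 1)
        rw [he, he'] at h ⊢
        have : (Tr2.gen e : Tr2 G.E) = Tr2.gen e' := by
          simpa [OrientedGraph.labelProd] using h
        injection this with h
        rw [h]
    refine hmin (R.erase r) (Finset.erase_ssubset hr) ?_
    intro M _ l
    constructor
    · intro h r' hr'
      exact (hcomp M l).1 h r' (Finset.mem_of_mem_erase hr')
    · intro h
      apply (hcomp M l).2
      intro r' hr'
      by_cases hrr : r' = r
      · rw [hrr, heq]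
      · exact h r' (Finset.mem_erase.2 ⟨hrr, hr'⟩)
  rcases Nat.lt_or_ge r.1.length 3 with h2 | h3
  · exact Or.inl ⟨by omega, by omega⟩
  · exact Or.inr ⟨h3, by omega⟩
end

section
/- Let R be a minimal complete system of relations for an oriented graph G, and let R_B ⊆ R be the subset of all relations (s, s') with |s| ≥ 2 and |s'| ≥ 2. Then m(R) ≥ |R_B|. -/
open Finset

private def vset {α : Type} [DecidableEq α] (A : Finset (α × α)) : Finset α :=
  A.image Prod.fst ∪ A.image Prod.snd

private lemma vset_mono {α : Type} [DecidableEq α] {A B : Finset (α × α)}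
    (h : A ⊆ B) : vset A ⊆ vset B :=
  Finset.union_subset_union (Finset.image_subset_image h) (Finset.image_subset_image h)

private lemma mem_vset_fst {α : Type} [DecidableEq α] {A : Finset (α × α)} {r : α × α}
    (h : r ∈ A) : r.1 ∈ vset A :=
  Finset.mem_union_left _ (Finset.mem_image_of_mem _ h)

private lemma mem_vset_snd {α : Type} [DecidableEq α] {A : Finset (α × α)} {r : α × α}
    (h : r ∈ A) : r.2 ∈ vset A :=
  Finset.mem_union_right _ (Finset.mem_image_of_mem _ h)

private lemma mem_vset_iff {α : Type} [DecidableEq α] {A : Finset (α × α)} {v : α} :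
    v ∈ vset A ↔ ∃ r ∈ A, v = r.1 ∨ v = r.2 := by
  simp only [vset, Finset.mem_union, Finset.mem_image]
  constructor
  · rintro (⟨r, hr, rfl⟩ | ⟨r, hr, rfl⟩) <;> exact ⟨r, hr, by simp⟩
  · rintro ⟨r, hr, rfl | rfl⟩
    · exact Or.inl ⟨r, hr, rfl⟩
    · exact Or.inr ⟨r, hr, rfl⟩

private def essential {α : Type} [DecidableEq α] (A : Finset (α × α)) : Prop :=
  ∀ r ∈ A, ¬ Relation.EqvGen (fun x y => (x, y) ∈ A.erase r) r.1 r.2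

private lemma essential_subset {α : Type} [DecidableEq α] {A B : Finset (α × α)}
    (h : B ⊆ A) (hA : essential A) : essential B := by
  intro r hr hE
  exact hA r (h hr) (hE.mono (fun x y hxy => Finset.erase_subset_erase r h hxy))

private lemma forest_bound {α : Type} [DecidableEq α] (A : Finset (α × α))
    (hess : essential A) (hne : A.Nonempty) : A.card + 1 ≤ (vset A).card := by
  classical
  induction A using Finset.strongInduction with
  | _ A IH =>
  obtain ⟨r0, hr0⟩ := hne
  set C := Relation.EqvGen (fun x y => (x, y) ∈ A.erase r0) with hC
  have hab : ¬ C r0.1 r0.2 := hess r0 hr0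
  have hane : r0.1 ≠ r0.2 := fun h => hab (h ▸ Relation.EqvGen.refl r0.1)
  set A' := A.erase r0 with hA'
  set A1 := A'.filter (fun e => C r0.1 e.1) with hA1
  set A2 := A'.filter (fun e => ¬ C r0.1 e.1) with hA2
  have hrelC : ∀ e ∈ A', C e.1 e.2 := fun e he => Relation.EqvGen.rel _ _ he
  have hCA1 : ∀ v ∈ vset A1, C r0.1 v := by
    intro v hv
    obtain ⟨e, he, rfl | rfl⟩ := mem_vset_iff.mp hv
    · exact (Finset.mem_filter.mp he).2
    · exact ((Finset.mem_filter.mp he).2).trans _ _ _ (hrelC e (Finset.mem_filter.mp he).1)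
  have hCA2 : ∀ v ∈ vset A2, ¬ C r0.1 v := by
    intro v hv hcv
    obtain ⟨e, he, rfl | rfl⟩ := mem_vset_iff.mp hv
    · exact (Finset.mem_filter.mp he).2 hcv
    · exact (Finset.mem_filter.mp he).2
        (hcv.trans _ _ _ ((hrelC e (Finset.mem_filter.mp he).1).symm _ _))
  have hA1sub : A1 ⊆ A := (Finset.filter_subset _ _).trans (Finset.erase_subset _ _)
  have hA2sub : A2 ⊆ A := (Finset.filter_subset _ _).trans (Finset.erase_subset _ _)
  have hA1ss : A1 ⊂ A := Finset.ssubset_of_subset_of_ssubset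
    (Finset.filter_subset _ _) (Finset.erase_ssubset hr0)
  have hA2ss : A2 ⊂ A := Finset.ssubset_of_subset_of_ssubset
    (Finset.filter_subset _ _) (Finset.erase_ssubset hr0)
  have hcard : A1.card + A2.card + 1 = A.card := by
    rw [Finset.card_filter_add_card_filter_not]
    exact Finset.card_erase_add_one hr0
  have hVsub1 : vset A1 ⊆ vset A := vset_mono hA1sub
  have hVsub2 : vset A2 ⊆ vset A := vset_mono hA2sub
  have haA : r0.1 ∈ vset A := mem_vset_fst hr0
  have hbA : r0.2 ∈ vset A := mem_vset_snd hr0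
  have hbA1 : r0.2 ∉ vset A1 := fun h => hab (hCA1 _ h)
  have haA2 : r0.1 ∉ vset A2 := fun h => hCA2 _ h (Relation.EqvGen.refl _)
  rcases Finset.eq_empty_or_nonempty A1 with h1 | h1 <;>
    rcases Finset.eq_empty_or_nonempty A2 with h2 | h2
  · -- both empty : A.card = 1, {a,b} ⊆ vset A
    have h1c : A1.card = 0 := by rw [h1]; simp
    have h2c : A2.card = 0 := by rw [h2]; simp
    have hpair : ({r0.1, r0.2} : Finset α) ⊆ vset A := by
      intro v hv
      rcases Finset.mem_insert.mp hv with rfl | hv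
      · exact haA
      · rw [Finset.mem_singleton.mp hv]; exact hbA
    have hc := Finset.card_le_card hpair
    rw [Finset.card_insert_of_notMem (by simpa using hane), Finset.card_singleton] at hc
    omega
  · -- A1 empty, A2 nonempty
    have IH2 := IH A2 hA2ss (essential_subset hA2sub hess) h2
    have : insert r0.1 (vset A2) ⊆ vset A := by
      intro v hv
      rcases Finset.mem_insert.mp hv with rfl | hv
      · exact haA
      · exact hVsub2 hv
    have hc := Finset.card_le_card this
    rw [Finset.card_insert_of_notMem haA2] at hc
    have h1c : A1.card = 0 := by rw [h1]; simp
    omega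
  · -- A1 nonempty, A2 empty
    have IH1 := IH A1 hA1ss (essential_subset hA1sub hess) h1
    have : insert r0.2 (vset A1) ⊆ vset A := by
      intro v hv
      rcases Finset.mem_insert.mp hv with rfl | hv
      · exact hbA
      · exact hVsub1 hv
    have hc := Finset.card_le_card this
    rw [Finset.card_insert_of_notMem hbA1] at hc
    have h2c : A2.card = 0 := by rw [h2]; simp
    omega
  · have IH1 := IH A1 hA1ss (essential_subset hA1sub hess) h1
    have IH2 := IH A2 hA2ss (essential_subset hA2sub hess) h2
    have hdisj : Disjoint (vset A1) (vset A2) := by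
      rw [Finset.disjoint_left]
      exact fun v hv1 hv2 => hCA2 v hv2 (hCA1 v hv1)
    have hsub : vset A1 ∪ vset A2 ⊆ vset A := Finset.union_subset hVsub1 hVsub2
    have hc := Finset.card_le_card hsub
    rw [Finset.card_union_of_disjoint hdisj] at hc
    omega

private lemma crossing {α : Type} (f : ℕ → Set α) (v : α) :
    ∀ n : ℕ, v ∉ f 0 → v ∈ f n → ∃ i < n, v ∉ f i ∧ v ∈ f (i + 1) := by
  intro n
  induction n with
  | zero => intro h0 hn; exact absurd hn h0
  | succ n IH =>
    intro h0 hn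
    by_cases hmem : v ∈ f n
    · obtain ⟨i, hi, h⟩ := IH h0 hmem
      exact ⟨i, Nat.lt_succ_of_lt hi, h⟩
    · exact ⟨n, Nat.lt_succ_self n, hmem, hn⟩


/-- Theorem: for a minimal complete system of relations `R`, `m(R) ≥ |R_B|`, where
`R_B` consists of the relations with both sides of length `≥ 2`. -/
theorem mRel_ge_card_RB (G : OrientedGraph)
    (R : Finset (List G.E × List G.E)) (hR : G.IsMinimalComplete R) :
    (((R.filter (fun r => 2 ≤ r.1.length ∧ 2 ≤ r.2.length)).card : ℕ) : ℕ∞) ≤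
      G.mRel R := by
  classical
  set RB := R.filter (fun r => 2 ≤ r.1.length ∧ 2 ≤ r.2.length) with hRB
  -- Step B : RB.card ≤ (vset RB).card
  have hess : essential RB := by
    intro r hr hE
    have hrR : r ∈ R := Finset.mem_filter.mp hr |>.1
    have hE' : Relation.EqvGen (fun x y => (x, y) ∈ R.erase r) r.1 r.2 :=
      hE.mono (fun x y hxy =>
        Finset.erase_subset_erase r (Finset.filter_subset _ _) hxy)
    apply hR.2 (R.erase r) (Finset.erase_ssubset hrR)
    intro M instM l
    constructor
    · intro hcomm r' hr'
      exact (hR.1 M l).mp hcomm r' (Finset.erase_subset r R hr')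
    · intro hrel
      have key : ∀ x y : List G.E,
          Relation.EqvGen (fun x y => (x, y) ∈ R.erase r) x y →
          G.labelProd l x = G.labelProd l y := by
        intro x y h
        induction h with
        | rel x y hxy => exact hrel (x, y) hxy
        | refl x => rfl
        | symm x y _ ih => exact ih.symm
        | trans x y z _ _ ih1 ih2 => exact ih1.trans ih2
      apply (hR.1 M l).mpr
      intro r' hr'
      by_cases hrr : r' = r
      · subst hrr; exact key r'.1 r'.2 hE'
      · exact hrel r' (Finset.mem_erase.mpr ⟨hrr, hr'⟩)
  have hB : RB.card ≤ (vset RB).card := by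
    rcases Finset.eq_empty_or_nonempty RB with h | h
    · simp [h]
    · exact Nat.le_of_succ_le (forest_bound RB hess h)
  -- Step A + plumbing
  apply le_sInf
  rintro k ⟨S, hSsub, rfl⟩
  apply le_sInf
  rintro k ⟨n, rfl, f, h0, hn, hstep⟩
  rw [Nat.cast_le]
  refine hB.trans ?_
  -- each element of vset RB is in S but not baseSet
  have hmemS : ∀ v ∈ vset RB, v ∈ f n := by
    intro v hv
    obtain ⟨r, hr, hvr⟩ := mem_vset_iff.mp hv
    rw [hn]
    exact hSsub ⟨r, Finset.mem_filter.mp hr |>.1, hvr⟩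
  have hlen : ∀ v ∈ vset RB, 2 ≤ v.length := by
    intro v hv
    obtain ⟨r, hr, hvr⟩ := mem_vset_iff.mp hv
    rcases hvr with rfl | rfl
    · exact (Finset.mem_filter.mp hr).2.1
    · exact (Finset.mem_filter.mp hr).2.2
  have hnotbase : ∀ v ∈ vset RB, v ∉ f 0 := by
    intro v hv hv0
    rw [h0] at hv0
    have := hlen v hv
    rcases hv0 with h | ⟨e, h⟩ <;> subst h <;> simp at this
  have hex : ∀ v ∈ vset RB, ∃ i, i < n ∧ v ∉ f i ∧ v ∈ f (i + 1) := by
    intro v hv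
    obtain ⟨i, hi, h1, h2⟩ := crossing f v n (hnotbase v hv) (hmemS v hv)
    exact ⟨i, hi, h1, h2⟩
  set g : List G.E → ℕ := fun v =>
    if h : ∃ i, i < n ∧ v ∉ f i ∧ v ∈ f (i + 1) then Nat.find h else 0 with hg
  have hgspec : ∀ v ∈ vset RB, g v < n ∧ v ∉ f (g v) ∧ v ∈ f (g v + 1) := by
    intro v hv
    have h := hex v hv
    rw [hg]
    simp only [dif_pos h]
    exact Nat.find_spec h
  have hadd : ∀ i < n, ∀ v v' : List G.E, v ∉ f i → v ∈ f (i+1) →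
      v' ∉ f i → v' ∈ f (i+1) → v = v' := by
    intro i hi v v' hv1 hv2 hv'1 hv'2
    obtain ⟨s, _, s', _, heq⟩ := hstep i hi
    rw [heq] at hv2 hv'2
    rcases hv2 with h | h
    · exact absurd h hv1
    · rcases hv'2 with h' | h'
      · exact absurd h' hv'1
      · rw [Set.mem_singleton_iff] at h h'
        rw [h, h']
  calc (vset RB).card ≤ (Finset.range n).card := by
        apply Finset.card_le_card_of_injOn g
        · intro v hv
          exact Finset.mem_range.mpr (hgspec v hv).1
        · intro v hv v' hv' hgv
          obtain ⟨hlt, h1, h2⟩ := hgspec v hv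
          obtain ⟨hlt', h1', h2'⟩ := hgspec v' hv'
          rw [hgv] at h1 h2
          exact hadd (g v') hlt' v v' h1 h2 h1' h2'
    _ = n := Finset.card_range n
end

section
/- Let R be a minimal complete system of relations for an oriented graph G, and assume that every relation (s, s') ∈ R satisfies |s| ≥ 2 and |s'| ≥ 2. Then m(R) ≥ |R|. -/
/-- Abstract counting lemma: an "independent" finite set of pairs over `α`
(each pair has a separating function agreeing on all other pairs) has
cardinality at most the number of distinct elements occurring in the pairs. -/
theorem indep_card_aux {α : Type} [DecidableEq α] :
    ∀ (n : ℕ) (R : Finset (α × α)), R.card = n →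
    (∀ r ∈ R, ∃ (M : Type) (v : α → M),
      (∀ r' ∈ R, r' ≠ r → v r'.1 = v r'.2) ∧ v r.1 ≠ v r.2) →
    R.card ≤ (R.image Prod.fst ∪ R.image Prod.snd).card := by
  intro n
  induction n using Nat.strong_induction_on with
  | _ n ih =>
    intro R hcard h
    rcases Finset.eq_empty_or_nonempty R with rfl | ⟨r₀, hr₀⟩
    · simp
    obtain ⟨M, v, hv, hv0⟩ := h r₀ hr₀
    set c : α → α := fun s => if s = r₀.1 then r₀.2 else s with hc
    have hcne : ∀ s, c s ≠ r₀.1 := by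
      intro s
      simp only [hc]
      split
      · exact fun he => hv0 (congrArg v he.symm)
      · rename_i h'; exact h'
    have hwc : ∀ {N : Type} (w : α → N), w r₀.1 = w r₀.2 → ∀ s, w (c s) = w s := by
      intro N w hw s
      simp only [hc]
      split
      · rename_i h'; rw [h', hw]
      · rfl
    set R' := (R.erase r₀).image (fun r : α × α => (c r.1, c r.2)) with hR'
    have hinj : ∀ r ∈ R.erase r₀, ∀ r' ∈ R.erase r₀,
        (c r.1, c r.2) = (c r'.1, c r'.2) → r = r' := by
      intro r hr r' hr' heq
      by_contra hne
      have hrR := Finset.mem_of_mem_erase hr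
      have hr'R := Finset.mem_of_mem_erase hr'
      obtain ⟨N, w, hw, hw0⟩ := h r hrR
      have hinv := hwc w (hw r₀ hr₀ (Finset.ne_of_mem_erase hr).symm)
      have heq1 : c r.1 = c r'.1 := congrArg Prod.fst heq
      have heq2 : c r.2 = c r'.2 := congrArg Prod.snd heq
      exact hw0 (by
        calc w r.1 = w (c r.1) := (hinv _).symm
          _ = w (c r'.1) := by rw [heq1]
          _ = w r'.1 := hinv _
          _ = w r'.2 := hw r' hr'R (Ne.symm hne)
          _ = w (c r'.2) := (hinv _).symm
          _ = w (c r.2) := by rw [heq2]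
          _ = w r.2 := hinv _)
    have hcardR' : R'.card = R.card - 1 := by
      rw [hR', Finset.card_image_of_injOn hinj, Finset.card_erase_of_mem hr₀]
    have hindep' : ∀ r' ∈ R', ∃ (M : Type) (v' : α → M),
        (∀ q' ∈ R', q' ≠ r' → v' q'.1 = v' q'.2) ∧ v' r'.1 ≠ v' r'.2 := by
      intro r' hr'
      obtain ⟨q, hq, rfl⟩ := Finset.mem_image.mp hr'
      obtain ⟨N, w, hw, hw0⟩ := h q (Finset.mem_of_mem_erase hq)
      have hinv := hwc w (hw r₀ hr₀ (Finset.ne_of_mem_erase hq).symm)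
      refine ⟨N, w, ?_, ?_⟩
      · intro q' hq' hne
        obtain ⟨p, hp, rfl⟩ := Finset.mem_image.mp hq'
        have hpq : p ≠ q := by rintro rfl; exact hne rfl
        calc w (c p.1) = w p.1 := hinv _
          _ = w p.2 := hw p (Finset.mem_of_mem_erase hp) hpq
          _ = w (c p.2) := (hinv _).symm
      · simpa only [hinv] using hw0
    have hVsub : R'.image Prod.fst ∪ R'.image Prod.snd ⊆
        (R.image Prod.fst ∪ R.image Prod.snd).erase r₀.1 := by
      intro s hs
      have hmem : s ∈ R.image Prod.fst ∪ R.image Prod.snd ∧ s ≠ r₀.1 := by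
        rcases Finset.mem_union.mp hs with hs | hs
        · obtain ⟨q', hq', rfl⟩ := Finset.mem_image.mp hs
          obtain ⟨q, hq, rfl⟩ := Finset.mem_image.mp hq'
          refine ⟨?_, hcne _⟩
          show c q.1 ∈ R.image Prod.fst ∪ R.image Prod.snd
          by_cases hq1 : q.1 = r₀.1
          · have : c q.1 = r₀.2 := by simp [hc, hq1]
            rw [this]
            exact Finset.mem_union_right _ (Finset.mem_image_of_mem _ hr₀)
          · have : c q.1 = q.1 := by simp [hc, hq1]
            rw [this]
            exact Finset.mem_union_left _
              (Finset.mem_image_of_mem _ (Finset.mem_of_mem_erase hq))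
        · obtain ⟨q', hq', rfl⟩ := Finset.mem_image.mp hs
          obtain ⟨q, hq, rfl⟩ := Finset.mem_image.mp hq'
          refine ⟨?_, hcne _⟩
          show c q.2 ∈ R.image Prod.fst ∪ R.image Prod.snd
          by_cases hq2 : q.2 = r₀.1
          · have : c q.2 = r₀.2 := by simp [hc, hq2]
            rw [this]
            exact Finset.mem_union_right _ (Finset.mem_image_of_mem _ hr₀)
          · have : c q.2 = q.2 := by simp [hc, hq2]
            rw [this]
            exact Finset.mem_union_right _
              (Finset.mem_image_of_mem _ (Finset.mem_of_mem_erase hq))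
      exact Finset.mem_erase.mpr ⟨hmem.2, hmem.1⟩
    have hs1mem : r₀.1 ∈ R.image Prod.fst ∪ R.image Prod.snd :=
      Finset.mem_union_left _ (Finset.mem_image_of_mem _ hr₀)
    have hVcard : (R'.image Prod.fst ∪ R'.image Prod.snd).card ≤
        (R.image Prod.fst ∪ R.image Prod.snd).card - 1 := by
      calc (R'.image Prod.fst ∪ R'.image Prod.snd).card
          ≤ ((R.image Prod.fst ∪ R.image Prod.snd).erase r₀.1).card :=
            Finset.card_le_card hVsub
        _ = (R.image Prod.fst ∪ R.image Prod.snd).card - 1 :=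
            Finset.card_erase_of_mem hs1mem
    have hRpos : 1 ≤ R.card := Finset.card_pos.mpr ⟨r₀, hr₀⟩
    have hVpos : 1 ≤ (R.image Prod.fst ∪ R.image Prod.snd).card :=
      Finset.card_pos.mpr ⟨r₀.1, hs1mem⟩
    have hlt : R'.card < n := by omega
    have := ih R'.card hlt R' rfl hindep'
    omega

/-- Along a chain of multiplication steps starting from `baseSet`, after `i` steps
the set is contained in `baseSet` plus at most `i` extra elements. -/
theorem chain_bound (G : OrientedGraph) (n : ℕ) (f : ℕ → Set (List G.E))
    (hf0 : f 0 = G.baseSet) (hstep : ∀ i < n, G.MulStep (f i) (f (i + 1))) :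
    ∀ i ≤ n, ∃ T : Finset (List G.E), T.card ≤ i ∧ f i ⊆ G.baseSet ∪ ↑T := by
  classical
  intro i
  induction i with
  | zero => intro _; exact ⟨∅, by simp, by rw [hf0]; simp⟩
  | succ i ihi =>
    intro hin
    obtain ⟨T, hT, hsub⟩ := ihi (by omega)
    obtain ⟨s, hs, s', hs', hset⟩ := hstep i (by omega)
    refine ⟨insert (s ++ s') T, ?_, ?_⟩
    · calc (insert (s ++ s') T).card ≤ T.card + 1 := Finset.card_insert_le _ _
        _ ≤ i + 1 := by omega
    · rw [hset]
      intro x hx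
      rcases hx with hx | hx
      · rcases hsub hx with hb | ht
        · exact Or.inl hb
        · exact Or.inr (Finset.mem_coe.mpr (Finset.mem_insert_of_mem ht))
      · have hx' : x = s ++ s' := hx
        exact Or.inr (Finset.mem_coe.mpr (hx' ▸ Finset.mem_insert_self _ _))

/-- Theorem: for a minimal complete system of relations `R` in which every relation has
both sides of length `≥ 2`, we have `m(R) ≥ |R|`. -/
theorem mRel_ge_card (G : OrientedGraph) (R : Finset (List G.E × List G.E))
    (hR : G.IsMinimalComplete R)
    (hlen : ∀ r ∈ R, 2 ≤ r.1.length ∧ 2 ≤ r.2.length) :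
    (R.card : ℕ∞) ≤ G.mRel R := by
  classical
  -- Step 1: witnesses from minimality
  have hwit : ∀ r ∈ R, ∃ (M : Type) (v : List G.E → M),
      (∀ r' ∈ R, r' ≠ r → v r'.1 = v r'.2) ∧ v r.1 ≠ v r.2 := by
    intro r hr
    have hss : R.erase r ⊂ R := Finset.erase_ssubset hr
    have hnc := hR.2 (R.erase r) hss
    unfold OrientedGraph.IsComplete at hnc
    push_neg at hnc
    obtain ⟨M, instM, l, hne⟩ := hnc
    have hcomp := hR.1 M l
    rcases hne with ⟨hA, r', hr', hr'ne⟩ | ⟨hA, hB⟩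
    · exact absurd (hcomp.mp hA r' (Finset.mem_of_mem_erase hr')) hr'ne
    · have hnotall : ¬ ∀ r' ∈ R, G.labelProd l r'.1 = G.labelProd l r'.2 :=
        fun hall => hA (hcomp.mpr hall)
      push_neg at hnotall
      obtain ⟨r', hr', hr'ne⟩ := hnotall
      have hrr : r' = r := by
        by_contra hne'
        exact hr'ne (hB r' (Finset.mem_erase.mpr ⟨hne', hr'⟩))
      subst hrr
      exact ⟨M, G.labelProd l,
        fun q hq hqr => hB q (Finset.mem_erase.mpr ⟨hqr, hq⟩), hr'ne⟩
  have h1 : R.card ≤ (R.image Prod.fst ∪ R.image Prod.snd).card :=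
    indep_card_aux R.card R rfl hwit
  -- Step 2: unfold mRel and mCost
  rw [OrientedGraph.mRel]
  refine le_sInf ?_
  rintro k ⟨S, hSsub, rfl⟩
  rw [OrientedGraph.mCost]
  refine le_sInf ?_
  rintro k ⟨n, rfl, f, hf0, hfn, hstep⟩
  have hgoal : R.card ≤ n := by
    obtain ⟨T, hT, hsub⟩ := chain_bound G n f hf0 hstep n le_rfl
    have h2 : (R.image Prod.fst ∪ R.image Prod.snd) ⊆ T := by
      intro s hs
      have hsrel : s ∈ G.relSet R ∧ 2 ≤ s.length := by
        rcases Finset.mem_union.mp hs with hs | hs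
        · obtain ⟨q, hq, rfl⟩ := Finset.mem_image.mp hs
          exact ⟨⟨q, hq, Or.inl rfl⟩, (hlen q hq).1⟩
        · obtain ⟨q, hq, rfl⟩ := Finset.mem_image.mp hs
          exact ⟨⟨q, hq, Or.inr rfl⟩, (hlen q hq).2⟩
      have hsS : s ∈ S := hSsub hsrel.1
      have : s ∈ G.baseSet ∪ ↑T := hsub (hfn ▸ hsS)
      rcases this with hb | ht
      · exfalso
        rcases hb with hb | ⟨e, hb⟩
        · rw [hb] at hsrel; simp at hsrel
        · rw [hb] at hsrel; simp at hsrel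
      · exact ht
    have := Finset.card_le_card h2
    omega
  exact_mod_cast hgoal
end
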